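/- arXiv:2511.21231 — 2 statements merged into one kernel-verified Lean document; each statement's English description precedes it below -/
import Mathlib

section
/- In the complex algebra with basis {e, p, t, s} where e is the unit, satisfying p·p = e, p·t = t·p = s, p·s = s·p = t, t·t = t·s = s·t = s·s = c(e + p) for a fixed nonzero constant c, the element n = t − s satisfies n² = 0 and n ≠ 0; hence this algebra is not semisimple (it has a nonzero nilpotent element). -/
/-- The symplectic-fermion Grothendieck algebra: a complex algebra with basis
`e = b 0` (the unit), `p = b 1`, `t = b 2`, `s = b 3`, satisfying
`p·p = e`, `p·t = t·p = s`, `p·s = s·p = t`, and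
`t·t = t·s = s·t = s·s = c·(e + p)` with `c ≠ 0`.  The element `n = t - s`
satisfies `n² = 0` and `n ≠ 0`; hence the algebra is not semisimple
(reduced): it has a nonzero nilpotent element. -/
theorem sympFermion_nilpotent_not_semisimple
    {A : Type*} [Ring A] [Algebra ℂ A] (b : Module.Basis (Fin 4) ℂ A)
    (c : ℂ) (hc : c ≠ 0)
    (he : b 0 = 1)
    (hpp : b 1 * b 1 = 1)
    (hpt : b 1 * b 2 = b 3) (htp : b 2 * b 1 = b 3)
    (hps : b 1 * b 3 = b 2) (hsp : b 3 * b 1 = b 2)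
    (htt : b 2 * b 2 = c • (1 + b 1)) (hts : b 2 * b 3 = c • (1 + b 1))
    (hst : b 3 * b 2 = c • (1 + b 1)) (hss : b 3 * b 3 = c • (1 + b 1)) :
    (b 2 - b 3) ^ 2 = 0 ∧ b 2 - b 3 ≠ 0 ∧ ¬ IsReduced A := by
  have hsq : (b 2 - b 3) ^ 2 = 0 := by
    rw [sq, sub_mul, mul_sub, mul_sub, htt, hts, hst, hss]
    abel
  have hne : b 2 - b 3 ≠ 0 := by
    intro h
    have := sub_eq_zero.mp h
    have h23 : (2 : Fin 4) ≠ 3 := by decide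
    exact h23 (b.injective this)
  exact ⟨hsq, hne, fun hr => hne ((hr.eq_zero _) ⟨2, by rw [hsq]⟩)⟩
end

section
/- In the 4-dimensional algebra A of the symplectic fermion Grothendieck ring, the left-regular representation of the element t (and of s) is not diagonalizable. -/
/-- An endomorphism of a vector space is diagonalizable if its eigenspaces
span the whole space. -/
def IsDiagonalizable {k V : Type*} [Field k] [AddCommGroup V] [Module k V]
    (f : Module.End k V) : Prop :=
  ⨆ μ : k, f.eigenspace μ = ⊤

/-- For an independent family of submodules, if a finite sum of members (one from
each submodule) vanishes, then each summand vanishes. -/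
lemma indep_sum_eq_zero {ι N : Type*} {k : Type*} [Field k] [AddCommGroup N] [Module k N]
    {p : ι → Submodule k N} (hp : iSupIndep p) (s : Finset ι) (g : ι → N)
    (hg : ∀ i, g i ∈ p i) (hsum : ∑ i ∈ s, g i = 0) : ∀ i ∈ s, g i = 0 := by
  classical
  intro i hi
  have h1 : g i = -∑ j ∈ s.erase i, g j := by
    have h := Finset.sum_erase_add s g hi
    rw [hsum] at h
    exact eq_neg_of_add_eq_zero_right h
  have h2 : g i ∈ ⨆ j ≠ i, p j := by
    rw [h1]
    refine Submodule.neg_mem _ (Submodule.sum_mem _ fun j hj => ?_)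
    have hji : j ≠ i := Finset.ne_of_mem_erase hj
    exact Submodule.mem_iSup_of_mem j (Submodule.mem_iSup_of_mem hji (hg j))
  exact (Submodule.disjoint_def.mp (hp i)) _ (hg i) h2

/-- A diagonalizable endomorphism `f` satisfies `ker f² = ker f`. -/
lemma diag_sq {V : Type*} [AddCommGroup V] [Module ℂ V] {f : Module.End ℂ V}
    (h : IsDiagonalizable f) {v : V} (h2 : f (f v) = 0) : f v = 0 := by
  classical
  have hv : v ∈ ⨆ μ : ℂ, f.eigenspace μ := by rw [h]; exact Submodule.mem_top
  obtain ⟨l, hl, hsum⟩ := (Submodule.mem_iSup_iff_exists_finsupp _ _).mp hv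
  have hfl : ∀ μ : ℂ, f (l μ) = μ • l μ := fun μ => Module.End.mem_eigenspace_iff.mp (hl μ)
  have hfv : f v = ∑ μ ∈ l.support, μ • l μ := by
    rw [← hsum, Finsupp.sum, map_sum]; exact Finset.sum_congr rfl fun μ _ => hfl μ
  have hffv : ∑ μ ∈ l.support, (μ * μ) • l μ = 0 := by
    rw [← h2, hfv, map_sum]
    exact (Finset.sum_congr rfl fun μ _ => by rw [map_smul, hfl μ, smul_smul]).symm
  have hz := indep_sum_eq_zero f.eigenspaces_iSupIndep l.support (fun μ => (μ * μ) • l μ)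
    (fun μ => Submodule.smul_mem _ _ (hl μ)) hffv
  rw [hfv]
  refine Finset.sum_eq_zero fun μ hμ => ?_
  rcases eq_or_ne μ 0 with h0 | h0
  · simp [h0]
  · have hl0 : l μ = 0 := by
      rcases smul_eq_zero.mp (hz μ hμ) with h' | h'
      · exact absurd h' (mul_ne_zero h0 h0)
      · exact h'
    simp [hl0]

/-- In the symplectic fermion Grothendieck algebra (complex algebra with
basis `e = b 0` (unit), `p = b 1`, `t = b 2`, `s = b 3`, relations `p² = e`,
`p·t = t·p = s`, `p·s = s·p = t`, `t·t = t·s = s·t = s·s = c·(e+p)`, `c ≠ 0`),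
the left-regular representation of `t` — and that of `s` — is not
diagonalizable. -/
theorem sympFermion_leftRegular_not_diagonalizable
    {A : Type*} [Ring A] [Algebra ℂ A] (b : Module.Basis (Fin 4) ℂ A)
    (c : ℂ) (hc : c ≠ 0)
    (he : b 0 = 1)
    (hpp : b 1 * b 1 = 1)
    (hpt : b 1 * b 2 = b 3) (htp : b 2 * b 1 = b 3)
    (hps : b 1 * b 3 = b 2) (hsp : b 3 * b 1 = b 2)
    (htt : b 2 * b 2 = c • (1 + b 1)) (hts : b 2 * b 3 = c • (1 + b 1))
    (hst : b 3 * b 2 = c • (1 + b 1)) (hss : b 3 * b 3 = c • (1 + b 1)) :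
    ¬ IsDiagonalizable (LinearMap.mulLeft ℂ (b 2)) ∧
    ¬ IsDiagonalizable (LinearMap.mulLeft ℂ (b 3)) := by
  have main : ∀ u w : A, u * u = c • (1 + b 1) → u * w = c • (1 + b 1) → u * b 1 = w →
      u ≠ w → ¬ IsDiagonalizable (LinearMap.mulLeft ℂ u) := by
    intro u w huu huw hup hne hdiag
    have h2 : (LinearMap.mulLeft ℂ u) ((LinearMap.mulLeft ℂ u) (1 - b 1)) = 0 := by
      simp [LinearMap.mulLeft_apply, mul_sub, mul_one, hup, huu, huw, sub_self]
    have h1 := diag_sq hdiag h2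
    apply hne
    simpa [LinearMap.mulLeft_apply, mul_sub, mul_one, hup, sub_eq_zero] using h1
  have hne : b 2 ≠ b 3 := fun h => by
    have h23 := b.injective h
    exact absurd h23 (by decide)
  exact ⟨main (b 2) (b 3) htt hts htp hne, main (b 3) (b 2) hss hst hsp hne.symm⟩
end
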